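/- arXiv:1610.01051 — 3 statements merged into one kernel-verified Lean document; each statement's English description precedes it below -/
import Mathlib

section
/- If A = U - V is a proper splitting of a real m×n matrix A, then A = (I - VU†)U and A† = U†(I - VU†)⁻¹. -/
open Matrix Polynomial

/-- `X` is the Moore-Penrose inverse of `A`. -/
def IsMP {m n : ℕ} (A : Matrix (Fin m) (Fin n) ℝ) (X : Matrix (Fin n) (Fin m) ℝ) : Prop :=
  A * X * A = A ∧ X * A * X = X ∧ (A * X)ᵀ = A * X ∧ (X * A)ᵀ = X * A

/-- `A = U - V` is a proper splitting: `R(U)=R(A)` and `N(U)=N(A)`. -/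
def ProperSplitting {m n : ℕ} (A U V : Matrix (Fin m) (Fin n) ℝ) : Prop :=
  A = U - V ∧ LinearMap.range U.mulVecLin = LinearMap.range A.mulVecLin ∧
    LinearMap.ker U.mulVecLin = LinearMap.ker A.mulVecLin

/-- `μ : ℂ` is an eigenvalue of the real matrix `M`. -/
def IsEigen {n : ℕ} (M : Matrix (Fin n) (Fin n) ℝ) (μ : ℂ) : Prop :=
  ((M.map (algebraMap ℝ ℂ)).charpoly).IsRoot μ

/-- The spectral radius of a real square matrix. -/
noncomputable def specRad {n : ℕ} (M : Matrix (Fin n) (Fin n) ℝ) : ℝ :=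
  sSup {r : ℝ | ∃ μ : ℂ, IsEigen M μ ∧ r = ‖μ‖}

/-- Entrywise nonnegativity. -/
def EntryNonneg {m n : ℕ} (A : Matrix (Fin m) (Fin n) ℝ) : Prop := ∀ i j, 0 ≤ A i j

/-- Entrywise order. -/
def EntryLE {m n : ℕ} (A B : Matrix (Fin m) (Fin n) ℝ) : Prop := ∀ i j, A i j ≤ B i j

/-- Entrywise strict order. -/
def EntryLT {m n : ℕ} (A B : Matrix (Fin m) (Fin n) ℝ) : Prop := ∀ i j, A i j < B i j

/-!
Since `R(U) = R(A)` and `N(U) = N(A)`, the orthogonal projectors agree: `U U† = A A†` and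
`U† U = A† A`. The first part follows from `A U† U = A`. For the second, with `P = U U†`,
`I - V U† = (I - P) + A U†` has the explicit inverse `(I - P) + U A†`, and
`A† (I - V U†) = A† - A† A A† + A† A U† = U† U U† = U†`.
-/

namespace Matrix

variable {R : Type*} [CommRing R] {k l m n : Type*} [Fintype m] [Fintype n]

theorem mul_mul_eq_of_range_le [Fintype l] {U : Matrix m n R} {X : Matrix n m R}
    {B : Matrix m l R} (hU : U * X * U = U)
    (h : LinearMap.range B.mulVecLin ≤ LinearMap.range U.mulVecLin) : U * X * B = B := by
  refine ext_iff_mulVec.mpr fun v => ?_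
  obtain ⟨w, hw⟩ := h ⟨v, rfl⟩
  simp only [mulVecLin_apply] at hw
  rw [← mulVec_mulVec, ← hw, mulVec_mulVec, hU]

theorem mul_mul_eq_of_ker_le {U : Matrix m n R} {X : Matrix n m R} {B : Matrix k n R}
    (hU : U * X * U = U) (h : LinearMap.ker U.mulVecLin ≤ LinearMap.ker B.mulVecLin) :
    B * X * U = B := by
  refine ext_iff_mulVec.mpr fun v => ?_
  have hUv : v - (X * U) *ᵥ v ∈ LinearMap.ker U.mulVecLin := by
    rw [LinearMap.mem_ker, mulVecLin_apply, mulVec_sub, mulVec_mulVec, ← Matrix.mul_assoc, hU,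
      sub_self]
  have hBv := h hUv
  rw [LinearMap.mem_ker, mulVecLin_apply, mulVec_sub, mulVec_mulVec, ← Matrix.mul_assoc,
    sub_eq_zero] at hBv
  exact hBv.symm

end Matrix

namespace IsMP

variable {m n : ℕ} {A U : Matrix (Fin m) (Fin n) ℝ} {X Y : Matrix (Fin n) (Fin m) ℝ}

theorem mul_eq_mul_of_range_eq (hA : IsMP A X) (hU : IsMP U Y)
    (h : LinearMap.range U.mulVecLin = LinearMap.range A.mulVecLin) : A * X = U * Y := by
  have hUYA : U * Y * A = A := mul_mul_eq_of_range_le hU.1 h.ge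
  have hAXU : A * X * U = U := mul_mul_eq_of_range_le hA.1 h.le
  calc A * X = (U * Y * A * X)ᵀ := by rw [hUYA, hA.2.2.1]
    _ = (A * X)ᵀ * (U * Y)ᵀ := by rw [← transpose_mul, Matrix.mul_assoc (U * Y)]
    _ = U * Y := by rw [hA.2.2.1, hU.2.2.1, ← Matrix.mul_assoc, hAXU]

theorem mul_eq_mul_of_ker_eq (hA : IsMP A X) (hU : IsMP U Y)
    (h : LinearMap.ker U.mulVecLin = LinearMap.ker A.mulVecLin) : X * A = Y * U := by
  have hAYU : A * Y * U = A := mul_mul_eq_of_ker_le hU.1 h.le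
  have hUXA : U * X * A = U := mul_mul_eq_of_ker_le hA.1 h.ge
  calc X * A = (X * (A * Y * U))ᵀ := by rw [hAYU, hA.2.2.2]
    _ = (Y * U)ᵀ * (X * A)ᵀ := by
        rw [← transpose_mul, Matrix.mul_assoc A, ← Matrix.mul_assoc X]
    _ = Y * U := by rw [hU.2.2.2, hA.2.2.2, Matrix.mul_assoc, ← Matrix.mul_assoc U, hUXA]

end IsMP

theorem stmt1 {m n : ℕ} (A U V : Matrix (Fin m) (Fin n) ℝ)
    (Ad : Matrix (Fin n) (Fin m) ℝ) (Ud : Matrix (Fin n) (Fin m) ℝ)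
    (hps : ProperSplitting A U V) (hA : IsMP A Ad) (hU : IsMP U Ud) :
    A = (1 - V * Ud) * U ∧ Ad = Ud * (1 - V * Ud)⁻¹ := by
  obtain ⟨hAUV, hran, hker⟩ := hps
  obtain rfl : V = U - A := by rw [hAUV]; abel
  have hP : A * Ad = U * Ud := hA.mul_eq_mul_of_range_eq hU hran
  have hQ : Ad * A = Ud * U := hA.mul_eq_mul_of_ker_eq hU hker
  have hAUdU : A * Ud * U = A := by rw [Matrix.mul_assoc, ← hQ, ← Matrix.mul_assoc, hA.1]
  have hAdUUd : Ad * U * Ud = Ad := by rw [Matrix.mul_assoc, ← hP, ← Matrix.mul_assoc, hA.2.1]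
  have hright : (1 - (U - A) * Ud) * (1 - U * Ud + U * Ad) = 1 := by
    simp only [Matrix.mul_add, Matrix.mul_sub, Matrix.sub_mul, Matrix.one_mul,
      Matrix.mul_one, ← Matrix.mul_assoc, hU.1, hAUdU, hP]
    abel
  have hleft : Ad * (1 - (U - A) * Ud) = Ud := by
    simp only [Matrix.mul_sub, Matrix.sub_mul, Matrix.mul_one, ← Matrix.mul_assoc, hAdUUd, hQ,
      hU.2.1]
    abel
  refine ⟨?_, ?_⟩
  · simp only [Matrix.sub_mul, Matrix.one_mul, hU.1, hAUdU]
    abel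
  · calc Ad = Ad * (1 - (U - A) * Ud) * (1 - U * Ud + U * Ad) := by
          rw [Matrix.mul_assoc, hright, Matrix.mul_one]
      _ = Ud * (1 - (U - A) * Ud)⁻¹ := by rw [hleft, inv_eq_right_inv hright]
end

section
/- Let A = U - V be a proper weak regular splitting of type II of A ∈ ℝ^{m×n} (proper splitting with U† ≥ 0 and VU† ≥ 0). Then A† ≥ 0 if and only if ρ(U†V) < 1. -/
open Matrix Polynomial

/-!
Because `U` and `A` have the same range and null space, the orthogonal projectors agree:
`A A† = U U†` and `A† A = U† U`. Substituting `V = U - A` gives `A† = U† + A† T` with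
`T = V U† ≥ 0`, hence `A† = U† (I + T + ⋯ + T^(N-1)) + A† T^N` for every `N`.
If `ρ(T) < 1` then `T^N → 0` (Gelfand's formula), so `A†` is a limit of nonnegative matrices.
Conversely, if `A† ≥ 0` and `T` had an eigenvalue `μ` with `|μ| ≥ 1`, the moduli `w` of an
eigenvector satisfy `w ≤ T w`, so `A† w = U† w + A† T w ≥ U† w + A† w` forces `U† w = 0`,
hence `T w = V U† w = 0` and `w = 0`. Finally `U† V` and `V U†` share their nonzero eigenvalues.
-/

open Filter Topology
open scoped NNReal ENNReal

namespace Matrix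

variable {l m R : Type*} [Fintype m] [CommRing R]

lemma mul_eq_left_of_ker_le [DecidableEq m] {P : Matrix m m R} {Q : Matrix l m R}
    (hP : IsIdempotentElem P)
    (h : LinearMap.ker P.mulVecLin ≤ LinearMap.ker Q.mulVecLin) : Q * P = Q := by
  refine toLin'.injective (LinearMap.ext fun v => ?_)
  have hv : v - P *ᵥ v ∈ LinearMap.ker P.mulVecLin := by
    rw [LinearMap.mem_ker, mulVecLin_apply, mulVec_sub, mulVec_mulVec, hP.eq, sub_self]
  have hQv := h hv
  rw [LinearMap.mem_ker, mulVecLin_apply, mulVec_sub, sub_eq_zero] at hQv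
  rw [toLin'_apply, toLin'_apply, ← mulVec_mulVec, hQv]

lemma mul_eq_right_of_range_le [Fintype l] [DecidableEq l] {P : Matrix m l R} {Q : Matrix m m R}
    (hQ : IsIdempotentElem Q) (h : LinearMap.range P.mulVecLin ≤ LinearMap.range Q.mulVecLin) :
    Q * P = P := by
  refine toLin'.injective (LinearMap.ext fun v => ?_)
  obtain ⟨u, hu⟩ := h ⟨v, rfl⟩
  rw [mulVecLin_apply, mulVecLin_apply] at hu
  rw [toLin'_apply, toLin'_apply, ← mulVec_mulVec, ← hu, mulVec_mulVec, hQ.eq]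

end Matrix

lemma Matrix.eq_mul_geom_sum_add_mul_pow {l m R : Type*} [Fintype m] [DecidableEq m] [Semiring R]
    {X Y : Matrix l m R} {T : Matrix m m R} (h : X = Y + X * T) (N : ℕ) :
    X = Y * ∑ k ∈ Finset.range N, T ^ k + X * T ^ N := by
  induction N with
  | zero => simp
  | succ N ih =>
    calc X = Y * ∑ k ∈ Finset.range N, T ^ k + X * T ^ N := ih
      _ = Y * ∑ k ∈ Finset.range N, T ^ k + (Y + X * T) * T ^ N :=
          congrArg (Y * ∑ k ∈ Finset.range N, T ^ k + · * T ^ N) h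
      _ = Y * ∑ k ∈ Finset.range (N + 1), T ^ k + X * T ^ (N + 1) := by
          rw [Finset.sum_range_succ, Matrix.mul_add, Matrix.add_mul, Matrix.mul_assoc, ← pow_succ']
          abel

section MoorePenrose

variable {m n : ℕ} {A B : Matrix (Fin m) (Fin n) ℝ} {X Y : Matrix (Fin n) (Fin m) ℝ}

lemma IsMP.ker_mul_self (hX : IsMP A X) :
    LinearMap.ker (X * A).mulVecLin = LinearMap.ker A.mulVecLin := by
  refine le_antisymm ?_ (by rw [Matrix.mulVecLin_mul]; exact LinearMap.ker_le_ker_comp _ _)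
  calc LinearMap.ker (X * A).mulVecLin ≤ LinearMap.ker (A * (X * A)).mulVecLin := by
        rw [Matrix.mulVecLin_mul A]; exact LinearMap.ker_le_ker_comp _ _
    _ = LinearMap.ker A.mulVecLin := by rw [← Matrix.mul_assoc, hX.1]

lemma IsMP.range_self_mul (hX : IsMP A X) :
    LinearMap.range (A * X).mulVecLin = LinearMap.range A.mulVecLin := by
  refine le_antisymm (by rw [Matrix.mulVecLin_mul]; exact LinearMap.range_comp_le_range _ _) ?_
  calc LinearMap.range A.mulVecLin = LinearMap.range (A * X * A).mulVecLin := by rw [hX.1]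
    _ ≤ LinearMap.range (A * X).mulVecLin := by
        rw [Matrix.mulVecLin_mul (A * X)]; exact LinearMap.range_comp_le_range _ _

lemma IsMP.isIdempotentElem_mul_self (hX : IsMP A X) : IsIdempotentElem (X * A) := by
  rw [IsIdempotentElem, ← Matrix.mul_assoc, hX.2.1]

lemma IsMP.isIdempotentElem_self_mul (hX : IsMP A X) : IsIdempotentElem (A * X) := by
  rw [IsIdempotentElem, ← Matrix.mul_assoc, hX.1]

lemma IsMP.mul_self_eq_of_ker_eq (hX : IsMP A X) (hY : IsMP B Y)
    (h : LinearMap.ker A.mulVecLin = LinearMap.ker B.mulVecLin) : X * A = Y * B := by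
  have hXY := Matrix.mul_eq_left_of_ker_le hX.isIdempotentElem_mul_self
    (by rw [hX.ker_mul_self, hY.ker_mul_self, h] : _ ≤ LinearMap.ker (Y * B).mulVecLin)
  have hYX := Matrix.mul_eq_left_of_ker_le hY.isIdempotentElem_mul_self
    (by rw [hX.ker_mul_self, hY.ker_mul_self, h] : _ ≤ LinearMap.ker (X * A).mulVecLin)
  calc X * A = (X * A * (Y * B))ᵀ := by rw [hYX, hX.2.2.2]
    _ = Y * B := by rw [Matrix.transpose_mul, hX.2.2.2, hY.2.2.2, hXY]

lemma IsMP.self_mul_eq_of_range_eq (hX : IsMP A X) (hY : IsMP B Y)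
    (h : LinearMap.range A.mulVecLin = LinearMap.range B.mulVecLin) : A * X = B * Y := by
  have hXY := Matrix.mul_eq_right_of_range_le hX.isIdempotentElem_self_mul
    (by rw [hX.range_self_mul, hY.range_self_mul, h] : LinearMap.range (B * Y).mulVecLin ≤ _)
  have hYX := Matrix.mul_eq_right_of_range_le hY.isIdempotentElem_self_mul
    (by rw [hX.range_self_mul, hY.range_self_mul, h] : LinearMap.range (A * X).mulVecLin ≤ _)
  calc A * X = (B * Y * (A * X))ᵀ := by rw [hYX, hX.2.2.1]
    _ = B * Y := by rw [Matrix.transpose_mul, hX.2.2.1, hY.2.2.1, hXY]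

lemma ProperSplitting.mp_eq_add_mul {U V : Matrix (Fin m) (Fin n) ℝ}
    {Ad Ud : Matrix (Fin n) (Fin m) ℝ}
    (hps : ProperSplitting A U V) (hA : IsMP A Ad) (hU : IsMP U Ud) :
    Ad = Ud + Ad * (V * Ud) := by
  obtain ⟨hAUV, hrange, hker⟩ := hps
  have hV : V = U - A := by rw [hAUV]; abel
  have hAU : A * Ad = U * Ud := hA.self_mul_eq_of_range_eq hU hrange.symm
  have hUA : Ud * U = Ad * A := hU.mul_self_eq_of_ker_eq hA hker
  calc Ad = Ud + Ad * (A * Ad) - Ud * U * Ud := by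
        rw [← Matrix.mul_assoc, hA.2.1, hU.2.1]; abel
    _ = Ud + Ad * (V * Ud) := by
        rw [hAU, hUA, hV, Matrix.sub_mul, Matrix.mul_sub, Matrix.mul_assoc]; abel

end MoorePenrose

lemma isEigen_iff_mem_spectrum {k : ℕ} (M : Matrix (Fin k) (Fin k) ℝ) (μ : ℂ) :
    IsEigen M μ ↔ μ ∈ spectrum ℂ (M.map (algebraMap ℝ ℂ)) :=
  mem_spectrum_iff_isRoot_charpoly.symm

lemma IsEigen.mul_comm {a b : ℕ} {P : Matrix (Fin a) (Fin b) ℝ} {Q : Matrix (Fin b) (Fin a) ℝ}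
    {μ : ℂ} (hμ : μ ≠ 0) (h : IsEigen (P * Q) μ) : IsEigen (Q * P) μ := by
  have hcomm := congrArg (eval μ)
    (charpoly_mul_comm' (P.map (algebraMap ℝ ℂ)) (Q.map (algebraMap ℝ ℂ)))
  rw [IsEigen, IsRoot.def] at h ⊢
  rw [← Matrix.map_mul, ← Matrix.map_mul, eval_mul, eval_mul, h, mul_zero, eval_pow,
    eval_X] at hcomm
  exact (mul_eq_zero.1 hcomm.symm).resolve_left (pow_ne_zero _ hμ)

lemma IsEigen.exists_nonneg_smul_le_mulVec {k : ℕ} {T : Matrix (Fin k) (Fin k) ℝ}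
    (hT : EntryNonneg T) {μ : ℂ} (h : IsEigen T μ) :
    ∃ w : Fin k → ℝ, 0 ≤ w ∧ w ≠ 0 ∧ ‖μ‖ • w ≤ T *ᵥ w := by
  rw [IsEigen, IsRoot.def, eval_charpoly, ← exists_mulVec_eq_zero_iff] at h
  obtain ⟨z, hz0, hz⟩ := h
  have hTz : (T.map (algebraMap ℝ ℂ)) *ᵥ z = μ • z := by
    rw [sub_mulVec, sub_eq_zero] at hz
    rw [← hz, scalar_apply, ← smul_one_eq_diagonal, smul_mulVec, one_mulVec]
  refine ⟨fun i => ‖z i‖, fun i => norm_nonneg _, fun hw => hz0 (funext fun i =>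
    norm_eq_zero.1 (congrFun hw i)), fun i => ?_⟩
  calc ‖μ‖ * ‖z i‖ = ‖∑ j, (T i j : ℂ) * z j‖ := by
        rw [← norm_mul, ← smul_eq_mul, ← Pi.smul_apply, ← hTz]; rfl
    _ ≤ ∑ j, ‖(T i j : ℂ) * z j‖ := norm_sum_le _ _
    _ = (T *ᵥ fun i => ‖z i‖) i := by
        simp only [norm_mul, Complex.norm_real, Real.norm_eq_abs, abs_of_nonneg (hT _ _)]
        rfl

lemma specRad_lt_iff {k : ℕ} (M : Matrix (Fin k) (Fin k) ℝ) {r : ℝ} (hr : 0 < r) :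
    specRad M < r ↔ ∀ μ, IsEigen M μ → ‖μ‖ < r := by
  have hfin : {r : ℝ | ∃ μ : ℂ, IsEigen M μ ∧ r = ‖μ‖}.Finite := by
    refine ((finite_setOfPred_isRoot (charpoly_monic (M.map (algebraMap ℝ ℂ))).ne_zero).image
      (‖·‖ : ℂ → ℝ)).subset ?_
    rintro _ ⟨μ, hμ, rfl⟩
    exact ⟨μ, hμ, rfl⟩
  refine ⟨fun h μ hμ => (le_csSup hfin.bddAbove ⟨μ, hμ, rfl⟩).trans_lt h, fun h => ?_⟩
  rcases Set.eq_empty_or_nonempty {r : ℝ | ∃ μ : ℂ, IsEigen M μ ∧ r = ‖μ‖} with he | hne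
  · rwa [specRad, he, Real.sSup_empty]
  · obtain ⟨μ, hμ, hsup⟩ := hne.csSup_mem hfin
    rw [specRad, hsup]
    exact h μ hμ

lemma specRad_mul_comm_lt_iff {a b : ℕ} (P : Matrix (Fin a) (Fin b) ℝ)
    (Q : Matrix (Fin b) (Fin a) ℝ) {r : ℝ} (hr : 0 < r) :
    specRad (P * Q) < r ↔ specRad (Q * P) < r := by
  have key : ∀ {a b : ℕ} (P : Matrix (Fin a) (Fin b) ℝ) (Q : Matrix (Fin b) (Fin a) ℝ),
      (∀ μ, IsEigen (P * Q) μ → ‖μ‖ < r) → ∀ μ, IsEigen (Q * P) μ → ‖μ‖ < r := by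
    intro a b P Q h μ hμ
    rcases eq_or_ne μ 0 with rfl | hμ0
    · simpa using hr
    · exact h μ (hμ.mul_comm hμ0)
  rw [specRad_lt_iff _ hr, specRad_lt_iff _ hr]
  exact ⟨key P Q, key Q P⟩

lemma spectrum.tendsto_pow_atTop_nhds_zero_of_spectralRadius_lt_one {A : Type*} [NormedRing A]
    [NormedAlgebra ℂ A] [CompleteSpace A] {a : A} (h : spectralRadius ℂ a < 1) :
    Tendsto (a ^ ·) atTop (𝓝 0) := by
  obtain ⟨r, hρr, hr1⟩ := ENNReal.lt_iff_exists_nnreal_btwn.1 h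
  have hev : ∀ᶠ N : ℕ in atTop, ‖a ^ N‖ ≤ (r : ℝ) ^ N := by
    filter_upwards [(spectrum.pow_nnnorm_pow_one_div_tendsto_nhds_spectralRadius a).eventually
      (gt_mem_nhds hρr), eventually_ne_atTop 0] with N hN hN0
    have : (‖a ^ N‖₊ : ℝ≥0∞) ≤ (r : ℝ≥0∞) ^ N := by
      rw [← ENNReal.rpow_inv_natCast_pow hN0 (‖a ^ N‖₊ : ℝ≥0∞), ← one_div]
      exact pow_le_pow_left₀ (by positivity) hN.le N
    exact_mod_cast this
  exact squeeze_zero_norm' hev (tendsto_pow_atTop_nhds_zero_of_lt_one r.2 (by exact_mod_cast hr1))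

attribute [local instance] Matrix.linftyOpNormedRing Matrix.linftyOpNormedAlgebra in
lemma tendsto_pow_atTop_nhds_zero_of_forall_isEigen {k : ℕ} {T : Matrix (Fin k) (Fin k) ℝ}
    (h : ∀ μ, IsEigen T μ → ‖μ‖ < 1) : Tendsto (T ^ ·) atTop (𝓝 0) := by
  set Tc := T.map (algebraMap ℝ ℂ)
  have hρ : spectralRadius ℂ Tc < 1 := by
    rcases (spectrum ℂ Tc).eq_empty_or_nonempty with he | hne
    · simp [spectralRadius, he]
    · exact_mod_cast spectrum.spectralRadius_lt_of_forall_lt_of_nonempty hne (r := 1)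
        fun z hz => by exact_mod_cast h z ((isEigen_iff_mem_spectrum T z).2 hz)
  have hc : Tendsto (fun N => (Tc ^ N).map Complex.re) atTop
      (𝓝 ((0 : Matrix (Fin k) (Fin k) ℂ).map Complex.re)) :=
    ((continuous_id.matrix_map Complex.continuous_re).tendsto 0).comp
      (spectrum.tendsto_pow_atTop_nhds_zero_of_spectralRadius_lt_one hρ)
  rw [Matrix.map_zero _ Complex.zero_re] at hc
  refine hc.congr fun N => ?_
  have hpow : Tc ^ N = (T ^ N).map (algebraMap ℝ ℂ) :=
    (map_pow (algebraMap ℝ ℂ).mapMatrix T N).symm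
  ext i j
  simp [hpow]

section EntryNonneg

variable {a b c : ℕ}

lemma EntryNonneg.mul {M : Matrix (Fin a) (Fin b) ℝ} {N : Matrix (Fin b) (Fin c) ℝ}
    (hM : EntryNonneg M) (hN : EntryNonneg N) : EntryNonneg (M * N) := fun i j => by
  rw [mul_apply]
  exact Finset.sum_nonneg fun k _ => mul_nonneg (hM i k) (hN k j)

lemma EntryNonneg.pow {T : Matrix (Fin a) (Fin a) ℝ} (hT : EntryNonneg T) :
    ∀ N : ℕ, EntryNonneg (T ^ N)
  | 0 => fun i j => by rw [pow_zero, one_apply]; split_ifs <;> norm_num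
  | N + 1 => by rw [pow_succ]; exact (hT.pow N).mul hT

lemma EntryNonneg.geom_sum {T : Matrix (Fin a) (Fin a) ℝ} (hT : EntryNonneg T) (N : ℕ) :
    EntryNonneg (∑ k ∈ Finset.range N, T ^ k) := fun i j => by
  rw [Matrix.sum_apply]
  exact Finset.sum_nonneg fun k _ => hT.pow k i j

lemma EntryNonneg.mulVec_nonneg {M : Matrix (Fin a) (Fin b) ℝ} (hM : EntryNonneg M)
    {v : Fin b → ℝ} (hv : 0 ≤ v) : 0 ≤ M *ᵥ v := fun i => by
  rw [Pi.zero_apply, mulVec, dotProduct]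
  exact Finset.sum_nonneg fun j _ => mul_nonneg (hM i j) (hv j)

lemma EntryNonneg.mulVec_mono {M : Matrix (Fin a) (Fin b) ℝ} (hM : EntryNonneg M)
    {v w : Fin b → ℝ} (h : v ≤ w) : M *ᵥ v ≤ M *ᵥ w := by
  simpa [mulVec_sub] using hM.mulVec_nonneg (sub_nonneg.2 h)

end EntryNonneg

lemma norm_lt_one_of_isEigen_of_eq_add_mul {a b : ℕ} {X Y : Matrix (Fin a) (Fin b) ℝ}
    {V : Matrix (Fin b) (Fin a) ℝ} (hXY : X = Y + X * (V * Y)) (hX : EntryNonneg X)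
    (hY : EntryNonneg Y) (hVY : EntryNonneg (V * Y)) {μ : ℂ} (hμ : IsEigen (V * Y) μ) :
    ‖μ‖ < 1 := by
  by_contra! hμ1
  obtain ⟨w, hw0, hw, hμw⟩ := hμ.exists_nonneg_smul_le_mulVec hVY
  have hwT : w ≤ (V * Y) *ᵥ w :=
    le_trans (by simpa using smul_le_smul_of_nonneg_right hμ1 hw0) hμw
  have hYw : Y *ᵥ w = 0 := by
    have hXw : X *ᵥ w = Y *ᵥ w + X *ᵥ ((V * Y) *ᵥ w) := by
      rw [mulVec_mulVec, ← add_mulVec, ← hXY]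
    refine le_antisymm ?_ (hY.mulVec_nonneg hw0)
    calc Y *ᵥ w = X *ᵥ w - X *ᵥ ((V * Y) *ᵥ w) := by rw [hXw, add_sub_cancel_right]
      _ ≤ 0 := sub_nonpos.2 (hX.mulVec_mono hwT)
  have hTw : (V * Y) *ᵥ w = 0 := by rw [← mulVec_mulVec, hYw, mulVec_zero]
  exact hw (le_antisymm (hTw ▸ hwT) hw0)

lemma EntryNonneg.of_eq_add_mul {a b : ℕ} {X Y : Matrix (Fin a) (Fin b) ℝ}
    {T : Matrix (Fin b) (Fin b) ℝ} (hXY : X = Y + X * T) (hY : EntryNonneg Y)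
    (hT : EntryNonneg T) (hlim : Tendsto (T ^ ·) atTop (𝓝 0)) : EntryNonneg X := by
  intro i j
  have hXT : Tendsto (fun N : ℕ => X * T ^ N) atTop (𝓝 (X * (0 : Matrix (Fin b) (Fin b) ℝ))) :=
    ((continuous_const.matrix_mul continuous_id).tendsto _).comp hlim
  have hX : Tendsto (fun N : ℕ => X - X * T ^ N) atTop (𝓝 X) := by
    simpa using tendsto_const_nhds.sub hXT
  refine ge_of_tendsto' (tendsto_pi_nhds.1 (tendsto_pi_nhds.1 hX i) j) fun N => ?_
  rw [sub_eq_of_eq_add (Matrix.eq_mul_geom_sum_add_mul_pow hXY N)]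
  exact hY.mul (hT.geom_sum N) i j

theorem stmt4 {m n : ℕ} (A U V : Matrix (Fin m) (Fin n) ℝ)
    (Ad : Matrix (Fin n) (Fin m) ℝ) (Ud : Matrix (Fin n) (Fin m) ℝ)
    (hps : ProperSplitting A U V) (hA : IsMP A Ad) (hU : IsMP U Ud)
    (hUd : EntryNonneg Ud) (hVUd : EntryNonneg (V * Ud)) :
    EntryNonneg Ad ↔ specRad (Ud * V) < 1 := by
  have hsplit : Ad = Ud + Ad * (V * Ud) := hps.mp_eq_add_mul hA hU
  rw [specRad_mul_comm_lt_iff Ud V one_pos, specRad_lt_iff _ one_pos]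
  exact ⟨fun hAd _ hμ => norm_lt_one_of_isEigen_of_eq_add_mul hsplit hAd hUd hVUd hμ,
    fun h => hUd.of_eq_add_mul hsplit hVUd (tendsto_pow_atTop_nhds_zero_of_forall_isEigen h)⟩
end

section
/- Let (U_k, V_k, E_k), k = 1,…,p, be a proper weak regular multisplitting of A ∈ ℝ^{m×n}, and set H = Σ_{k=1}^p E_k U_k† V_k. Then H ≥ 0, and Σ_{k=1}^p E_k U_k† A = (I - H) A† A. -/
open Matrix Polynomial

/-!
Since `U_k` and `A` have the same null space, `U_k† U_k` and `A† A` are orthogonal projections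
that absorb each other, so they coincide. Hence `U_k† A = U_k† (U_k - V_k) = A† A - U_k† V_k`,
and `U_k† V_k` is fixed by right multiplication with `A† A`. Averaging with the weights `E_k`,
which sum to the identity, gives the identity; `H ≥ 0` is immediate from `E_k ≥ 0` and
`U_k† V_k ≥ 0`.
-/

theorem Matrix.mul_eq_zero_of_ker_le {R l m n q : Type*} [CommRing R] [Fintype n]
    {A : Matrix m n R} {B : Matrix l n R}
    (h : LinearMap.ker A.mulVecLin ≤ LinearMap.ker B.mulVecLin)
    {M : Matrix n q R} (hM : A * M = 0) : B * M = 0 := by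
  ext i j
  have hcol : A *ᵥ Mᵀ j = 0 := by
    ext i'
    simpa [Matrix.mul_apply, Matrix.mulVec, dotProduct, mul_comm] using congrFun (congrFun hM i') j
  have := congrFun (h (LinearMap.mem_ker.mpr hcol) : B *ᵥ Mᵀ j = 0) i
  simpa [Matrix.mul_apply, Matrix.mulVec, dotProduct, mul_comm] using this

theorem Finset.sum_mul_sub_eq_one_sub_sum_mul {ι R : Type*} [Fintype ι] [Ring R] {e w : ι → R}
    {q : R} (he : ∑ k, e k = 1) (hw : ∀ k, w k * q = w k) :
    ∑ k, e k * (q - w k) = (1 - ∑ k, e k * w k) * q := by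
  have hq : ∑ k, e k * q = q := by rw [← Finset.sum_mul, he, one_mul]
  simp only [mul_sub, Finset.sum_sub_distrib, hq, sub_mul, one_mul, Finset.sum_mul, mul_assoc, hw]

section EntryNonneg

variable {m n l : ℕ}

theorem EntryNonneg.mul_s13 {A : Matrix (Fin m) (Fin n) ℝ} {B : Matrix (Fin n) (Fin l) ℝ}
    (hA : EntryNonneg A) (hB : EntryNonneg B) : EntryNonneg (A * B) := fun i j => by
  rw [Matrix.mul_apply]
  exact Finset.sum_nonneg fun k _ => mul_nonneg (hA i k) (hB k j)

theorem EntryNonneg.sum {ι : Type*} [Fintype ι] {A : ι → Matrix (Fin m) (Fin n) ℝ}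
    (hA : ∀ k, EntryNonneg (A k)) : EntryNonneg (∑ k, A k) := fun i j => by
  rw [Matrix.sum_apply]
  exact Finset.sum_nonneg fun k _ => hA k i j

end EntryNonneg

namespace IsMP

variable {m n : ℕ} {A : Matrix (Fin m) (Fin n) ℝ} {X : Matrix (Fin n) (Fin m) ℝ}

theorem mul_mul_pinv_mul (hA : IsMP A X) : A * (X * A) = A := by
  rw [← Matrix.mul_assoc, hA.1]

theorem mul_pinv_mul_of_ker_le (hA : IsMP A X) {B : Matrix (Fin m) (Fin n) ℝ}
    (h : LinearMap.ker A.mulVecLin ≤ LinearMap.ker B.mulVecLin) : B * (X * A) = B := by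
  have hA0 : A * (X * A - 1) = 0 := by
    rw [Matrix.mul_sub, hA.mul_mul_pinv_mul, Matrix.mul_one, sub_self]
  simpa [Matrix.mul_sub, sub_eq_zero] using Matrix.mul_eq_zero_of_ker_le h hA0

theorem pinv_mul_eq_of_ker_eq (hA : IsMP A X) {U : Matrix (Fin m) (Fin n) ℝ}
    {Y : Matrix (Fin n) (Fin m) ℝ} (hU : IsMP U Y)
    (hker : LinearMap.ker U.mulVecLin = LinearMap.ker A.mulVecLin) : Y * U = X * A := by
  have hPQ : Y * U * (X * A) = Y * U := by
    rw [Matrix.mul_assoc, hA.mul_pinv_mul_of_ker_le hker.ge]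
  have hQP : X * A * (Y * U) = X * A := by
    rw [Matrix.mul_assoc, hU.mul_pinv_mul_of_ker_le hker.le]
  calc Y * U = (Y * U * (X * A))ᵀ := by rw [hPQ, hU.2.2.2]
    _ = X * A * (Y * U) := by rw [Matrix.transpose_mul, hU.2.2.2, hA.2.2.2]
    _ = X * A := hQP

theorem pinv_mul_of_properSplitting (hA : IsMP A X) {U V : Matrix (Fin m) (Fin n) ℝ}
    {Y : Matrix (Fin n) (Fin m) ℝ} (hs : ProperSplitting A U V) (hU : IsMP U Y) :
    Y * A = X * A - Y * V := by
  rw [hs.1, Matrix.mul_sub, hA.pinv_mul_eq_of_ker_eq hU hs.2.2, ← hs.1]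

theorem pinv_mul_mul_pinv_mul_of_properSplitting (hA : IsMP A X) {U V : Matrix (Fin m) (Fin n) ℝ}
    {Y : Matrix (Fin n) (Fin m) ℝ} (hs : ProperSplitting A U V) (hU : IsMP U Y) :
    Y * V * (X * A) = Y * V := by
  have hYV : Y * V = X * A - Y * A := by
    rw [hA.pinv_mul_of_properSplitting hs hU, sub_sub_cancel]
  rw [hYV, Matrix.sub_mul, Matrix.mul_assoc X, hA.mul_mul_pinv_mul, Matrix.mul_assoc Y,
    hA.mul_mul_pinv_mul]

end IsMP

theorem stmt13_general {m n p : ℕ} (A : Matrix (Fin m) (Fin n) ℝ)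
    (U V : Fin p → Matrix (Fin m) (Fin n) ℝ) (Ud : Fin p → Matrix (Fin n) (Fin m) ℝ)
    (E : Fin p → Matrix (Fin n) (Fin n) ℝ)
    (Ad : Matrix (Fin n) (Fin m) ℝ) (hA : IsMP A Ad)
    (hps : ∀ k, ProperSplitting A (U k) (V k)) (hU : ∀ k, IsMP (U k) (Ud k))
    (hE0 : ∀ k, EntryNonneg (E k))
    (hEsum : ∑ k, E k = 1)
    (hUdV : ∀ k, EntryNonneg (Ud k * V k)) :
    EntryNonneg (∑ k, E k * Ud k * V k) ∧
    ∑ k, E k * Ud k * A = (1 - ∑ k, E k * Ud k * V k) * (Ad * A) := by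
  simp only [Matrix.mul_assoc (E _)]
  refine ⟨EntryNonneg.sum fun k => (hE0 k).mul_s13 (hUdV k), ?_⟩
  simp only [hA.pinv_mul_of_properSplitting (hps _) (hU _)]
  exact Finset.sum_mul_sub_eq_one_sub_sum_mul hEsum
    fun k => hA.pinv_mul_mul_pinv_mul_of_properSplitting (hps k) (hU k)

theorem stmt13 {m n p : ℕ} (A : Matrix (Fin m) (Fin n) ℝ)
    (U V : Fin p → Matrix (Fin m) (Fin n) ℝ) (Ud : Fin p → Matrix (Fin n) (Fin m) ℝ)
    (E : Fin p → Matrix (Fin n) (Fin n) ℝ)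
    (Ad : Matrix (Fin n) (Fin m) ℝ) (hA : IsMP A Ad)
    (hps : ∀ k, ProperSplitting A (U k) (V k)) (hU : ∀ k, IsMP (U k) (Ud k))
    (hE0 : ∀ k, EntryNonneg (E k)) (hEdiag : ∀ k, ∀ i j, i ≠ j → E k i j = 0)
    (hEsum : ∑ k, E k = 1)
    (hUd : ∀ k, EntryNonneg (Ud k)) (hUdV : ∀ k, EntryNonneg (Ud k * V k)) :
    EntryNonneg (∑ k, E k * Ud k * V k) ∧
    ∑ k, E k * Ud k * A = (1 - ∑ k, E k * Ud k * V k) * (Ad * A) :=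
  stmt13_general A U V Ud E Ad hA hps hU hE0 hEsum hUdV
end
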